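/- Fix a natural number $n \geq 1$, set $N = \{1,\ldots,n\}$, and let $f : \mathcal{P}(N) \to [-1,1]$ be any function. Define $g : \mathcal{P}(N) \to \mathbb{R}$ by $g(T) = \sum_{\sigma \in S_k} \mathrm{sign}(\sigma) \prod_{i=1}^{k} f(\{t_{\sigma(1)},\ldots,t_{\sigma(i)}\})$ for $T = \{t_1 < \cdots < t_k\}$ (so $g(\emptyset) = 1$). Let $V = \bigoplus_{k=0}^{n} \bigwedge^k \mathbb{R}^n$ with the inner product making $\{\delta_S : S \subseteq N\}$ orthonormal, where $\delta_S = e_{s_1} \wedge \cdots \wedge e_{s_k}$ for $S = \{s_1 < \cdots < s_k\}$ and $e_1,\ldots,e_n$ the canonical basis of $\mathbb{R}^n$. Let $P \in \mathrm{End}(V)$ satisfy $P(\delta_S) = f(S)\,\delta_S$, let $\alpha = \frac{1}{\sqrt{n}}(\delta_{\{1\}} + \cdots + \delta_{\{n\}})$, and let $R \in \mathrm{End}(V)$ be $\varphi \mapsto \varphi \wedge \alpha$. Then $g(N)\,\delta_N = \sqrt{n}^{\,n}\,(P \circ R)^n(\delta_\emptyset)$. -/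

import Mathlib

/-! Multiplying by `α = (e_1 + ⋯ + e_n) / √n` appends one letter at a time, so `(P ∘ R)^k (δ_∅)` is
`√n^{-k}` times a sum over words `w` of length `k` of `e_{w_1} ∧ ⋯ ∧ e_{w_k}`, weighted by the
product of `f` over the prefix sets of `w`: a wedge of basis vectors is a multiple of `δ_S` for `S`
its set of letters, hence an eigenvector of `P` with eigenvalue `f S`. For `k = n` only injective
words, i.e. permutations `σ`, survive, and `e_{σ 1} ∧ ⋯ ∧ e_{σ n} = sign σ • δ_N`, which assembles
the sum into `g(N) δ_N`. -/

/-- `δ S = e_{s_1} ∧ ⋯ ∧ e_{s_k}` for `S = {s_1 < ⋯ < s_k} ⊆ {1,…,n}`, viewed inside the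
exterior algebra `V = ⨁_k ⋀^k ℝⁿ` of `ℝⁿ` (with `e_1,…,e_n` the canonical basis).
In particular `δ ∅ = 1 ∈ ⋀^0 ℝⁿ` and `δ N = e_1 ∧ ⋯ ∧ e_n`. -/
noncomputable def deltaWedge (n : ℕ) (S : Finset (Fin n)) :
    ExteriorAlgebra ℝ (EuclideanSpace ℝ (Fin n)) :=
  ((S.sort (· ≤ ·)).map fun i =>
    ExteriorAlgebra.ι ℝ (EuclideanSpace.single i (1 : ℝ))).prod

theorem LinearMap.iterate_smul_apply {R M : Type*} [CommSemiring R] [AddCommMonoid M]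
    [Module R M] (f : M →ₗ[R] M) (c : R) (k : ℕ) (x : M) :
    (fun y => c • f y)^[k] x = c ^ k • f^[k] x := by
  have := congr($(smul_pow c f k) x)
  rwa [Module.End.pow_apply, LinearMap.smul_apply, Module.End.pow_apply] at this

theorem AlternatingMap.sum_smul_map_comp {R M N ι : Type*} [CommRing R] [AddCommGroup M]
    [Module R M] [AddCommGroup N] [Module R N] [Fintype ι] [DecidableEq ι]
    (φ : M [⋀^ι]→ₗ[R] N) (v : ι → M) (c : (ι → ι) → R) :
    ∑ w : ι → ι, c w • φ (v ∘ w)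
      = (∑ σ : Equiv.Perm ι, ((Equiv.Perm.sign σ : ℤ) : R) * c σ) • φ v := by
  have hperm : ∑ σ : Equiv.Perm ι, c σ • φ (v ∘ σ) = ∑ w, c w • φ (v ∘ w) := by
    refine (Finset.sum_map Finset.univ ⟨_, DFunLike.coe_injective⟩
      fun w => c w • φ (v ∘ w)).symm.trans ?_
    refine Finset.sum_subset (Finset.subset_univ _) fun w _ hw => ?_
    have hw : ¬ Function.Injective w := fun hinj =>
      hw (Finset.mem_map.2 ⟨Equiv.ofBijective w (Finite.injective_iff_bijective.1 hinj),
        Finset.mem_univ _, rfl⟩)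
    rw [φ.map_eq_zero_of_not_injective _ fun h => hw h.of_comp, smul_zero]
  rw [← hperm, Finset.sum_smul]
  refine Finset.sum_congr rfl fun σ _ => ?_
  rw [φ.map_perm, smul_comm, Units.smul_def, ← Int.cast_smul_eq_zsmul R, smul_smul]

theorem ExteriorAlgebra.ιMulti_snoc {R M : Type*} [CommRing R] [AddCommGroup M] [Module R M]
    {k : ℕ} (v : Fin k → M) (m : M) :
    ιMulti R (k + 1) (Fin.snoc v m) = ιMulti R k v * ι R m := by
  rw [ιMulti_apply, ιMulti_apply, List.ofFn_succ']
  simp [List.concat_eq_append]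

theorem deltaWedge_eq_ιMulti {n k : ℕ} (S : Finset (Fin n)) (h : S.card = k) :
    deltaWedge n S = ExteriorAlgebra.ιMulti ℝ k
      (fun i => EuclideanSpace.single (S.orderEmbOfFin h i) (1 : ℝ)) := by
  rw [ExteriorAlgebra.ιMulti_apply, deltaWedge]
  congr 1
  apply List.ext_getElem <;> simp [h, Finset.orderEmbOfFin_apply]

theorem exists_ιMulti_single_eq_smul_deltaWedge {n k : ℕ} (w : Fin k → Fin n) :
    ∃ ε : ℝ, ExteriorAlgebra.ιMulti ℝ k ((EuclideanSpace.single · (1 : ℝ)) ∘ w)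
      = ε • deltaWedge n (Finset.univ.image w) := by
  by_cases hw : Function.Injective w
  swap
  · refine ⟨0, ?_⟩
    rw [AlternatingMap.map_eq_zero_of_not_injective _ _ fun h => hw h.of_comp, zero_smul]
  have hcard : (Finset.univ.image w).card = k := by
    rw [Finset.card_image_of_injective _ hw, Finset.card_univ, Fintype.card_fin]
  set σ := Tuple.sort w
  have hsorted : w ∘ σ = Finset.orderEmbOfFin _ hcard := by
    refine Finset.orderEmbOfFin_unique hcard (fun i => by simp) ?_
    exact (Tuple.monotone_sort w).strictMono_of_injective (hw.comp σ.injective)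
  refine ⟨((Equiv.Perm.sign σ⁻¹ : ℤ) : ℝ), ?_⟩
  rw [deltaWedge_eq_ιMulti _ hcard, ← hsorted]
  have hperm := (ExteriorAlgebra.ιMulti ℝ k).map_perm
    (fun i => EuclideanSpace.single ((w ∘ σ) i) (1 : ℝ)) σ⁻¹
  rw [Units.smul_def, ← Int.cast_smul_eq_zsmul ℝ] at hperm
  rw [← hperm]
  congr 1
  funext i
  simp

theorem Fin.image_snoc_Iic_castSucc {α : Type*} [DecidableEq α] {k : ℕ} (w : Fin k → α) (a : α)
    (i : Fin k) : (Finset.Iic i.castSucc).image (Fin.snoc w a : Fin (k + 1) → α)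
      = (Finset.Iic i).image w := by
  rw [← Fin.finsetImage_castSucc_Iic, Finset.image_image]
  congr 1
  funext j
  simp

theorem ExteriorAlgebra.iterate_comp_mulRight_ι_sum_one {R M κ : Type*} [CommRing R]
    [AddCommGroup M] [Module R M] [Fintype κ] [DecidableEq κ] (v : κ → M) (f : Finset κ → R)
    (P : ExteriorAlgebra R M →ₗ[R] ExteriorAlgebra R M)
    (hP : ∀ k (w : Fin k → κ),
      P (ιMulti R k (v ∘ w)) = f (Finset.univ.image w) • ιMulti R k (v ∘ w)) (k : ℕ) :
    (P ∘ₗ LinearMap.mulRight R (ι R (∑ i, v i)))^[k] 1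
      = ∑ w : Fin k → κ, (∏ i, f ((Finset.Iic i).image w)) • ιMulti R k (v ∘ w) := by
  induction k with
  | zero => simp
  | succ k ih =>
    rw [Function.iterate_succ_apply', ih, LinearMap.comp_apply, LinearMap.mulRight_apply,
      ← (Fin.snocEquiv fun _ => κ).sum_comp, Fintype.sum_prod_type, Finset.sum_comm,
      Finset.sum_mul, map_sum]
    refine Finset.sum_congr rfl fun w _ => ?_
    simp only [map_sum, Finset.mul_sum, smul_mul_assoc, map_smul]
    refine Finset.sum_congr rfl fun j _ => ?_
    rw [show (Fin.snocEquiv fun _ => κ) (j, w) = Fin.snoc w j from rfl, ← ιMulti_snoc,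
      ← Fin.comp_snoc, hP, smul_smul, Fin.prod_univ_castSucc, ← Fin.top_eq_last, Finset.Iic_top]
    simp only [Fin.image_snoc_Iic_castSucc]

theorem deltaWedge_univ (n : ℕ) :
    deltaWedge n Finset.univ = ExteriorAlgebra.ιMulti ℝ n (EuclideanSpace.single · (1 : ℝ)) := by
  rw [deltaWedge_eq_ιMulti _ (Finset.card_fin n),
    ← Finset.orderEmbOfFin_unique (Finset.card_fin n) (fun _ => Finset.mem_univ _) strictMono_id]
  rfl

theorem sum_sign_mul_prod_image_orderEmbOfFin_univ {R : Type*} [CommRing R] (n : ℕ)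
    (f : Finset (Fin n) → R) :
    ∑ σ : Equiv.Perm (Fin (Finset.univ : Finset (Fin n)).card), ((Equiv.Perm.sign σ : ℤ) : R) *
        ∏ i, f ((Finset.Iic i).image fun j => Finset.univ.orderEmbOfFin rfl (σ j))
      = ∑ σ : Equiv.Perm (Fin n),
          ((Equiv.Perm.sign σ : ℤ) : R) * ∏ i, f ((Finset.Iic i).image σ) := by
  -- generalizing the cardinality lets `Fin (Finset.univ : Finset (Fin n)).card` become `Fin n`
  suffices ∀ m (h : (Finset.univ : Finset (Fin n)).card = m),
      ∑ σ : Equiv.Perm (Fin (Finset.univ : Finset (Fin n)).card), ((Equiv.Perm.sign σ : ℤ) : R) *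
        ∏ i, f ((Finset.Iic i).image fun j => Finset.univ.orderEmbOfFin rfl (σ j))
      = ∑ σ : Equiv.Perm (Fin m), ((Equiv.Perm.sign σ : ℤ) : R) *
        ∏ i, f ((Finset.Iic i).image fun j => Finset.univ.orderEmbOfFin h (σ j)) by
    rw [this n (Finset.card_fin n), ← Finset.orderEmbOfFin_unique (Finset.card_fin n)
      (fun _ => Finset.mem_univ _) strictMono_id]
    rfl
  rintro m rfl
  rfl

theorem Real.sqrt_natCast_pow_mul_inv_pow (n : ℕ) : √n ^ n * (√n)⁻¹ ^ n = 1 := by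
  rw [← mul_pow]
  rcases n with _ | n
  · simp
  · rw [mul_inv_cancel₀ (by positivity), one_pow]

theorem gN_deltaN_eq_iterate_general (n : ℕ)
    (f : Finset (Fin n) → ℝ)
    (g : Finset (Fin n) → ℝ)
    (hg : ∀ T : Finset (Fin n),
      g T = ∑ σ : Equiv.Perm (Fin T.card),
        ((Equiv.Perm.sign σ : ℤ) : ℝ) *
          ∏ i : Fin T.card,
            f ((Finset.Iic i).image fun j => T.orderEmbOfFin rfl (σ j)))
    (P R : ExteriorAlgebra ℝ (EuclideanSpace ℝ (Fin n)) →ₗ[ℝ]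
           ExteriorAlgebra ℝ (EuclideanSpace ℝ (Fin n)))
    (hP : ∀ S : Finset (Fin n), P (deltaWedge n S) = f S • deltaWedge n S)
    (hR : ∀ φ : ExteriorAlgebra ℝ (EuclideanSpace ℝ (Fin n)),
      R φ = φ * ExteriorAlgebra.ι ℝ
        ((Real.sqrt n)⁻¹ • ∑ i : Fin n, EuclideanSpace.single i (1 : ℝ))) :
    g Finset.univ • deltaWedge n Finset.univ
      = (Real.sqrt n ^ n) •
        ((fun v => P (R v))^[n] (deltaWedge n (∅ : Finset (Fin n)))) := by
  have hPR : (fun v => P (R v)) = fun v => (√n)⁻¹ • (P ∘ₗ LinearMap.mulRight ℝ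
      (ExteriorAlgebra.ι ℝ (∑ i : Fin n, EuclideanSpace.single i (1 : ℝ)))) v := by
    funext v
    rw [hR, map_smul, mul_smul_comm, map_smul, LinearMap.comp_apply, LinearMap.mulRight_apply]
  have hPw : ∀ k (w : Fin k → Fin n),
      P (ExteriorAlgebra.ιMulti ℝ k ((EuclideanSpace.single · (1 : ℝ)) ∘ w))
        = f (Finset.univ.image w) •
          ExteriorAlgebra.ιMulti ℝ k ((EuclideanSpace.single · (1 : ℝ)) ∘ w) := by
    intro k w
    obtain ⟨ε, hε⟩ := exists_ιMulti_single_eq_smul_deltaWedge w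
    rw [hε, map_smul, hP, smul_comm]
  have hδ : deltaWedge n ∅ = 1 := by simp [deltaWedge]
  rw [hPR, LinearMap.iterate_smul_apply, hδ,
    ExteriorAlgebra.iterate_comp_mulRight_ι_sum_one _ f P hPw n, AlternatingMap.sum_smul_map_comp,
    smul_smul, Real.sqrt_natCast_pow_mul_inv_pow, one_smul, hg,
    sum_sign_mul_prod_image_orderEmbOfFin_univ, deltaWedge_univ]

/-- With `f : 𝒫({1,…,n}) → [-1,1]` (`n ≥ 1`), `g` defined from `f` by the
signed sum over permutations, `P (δ S) = f S • δ S`, `α = (1/√n)(δ{1} + ⋯ + δ{n})` and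
`R : φ ↦ φ ∧ α`, one has `g(N) • δ_N = √n ^ n • (P ∘ R)^n (δ_∅)`. -/
theorem gN_deltaN_eq_iterate (n : ℕ) (hn : 1 ≤ n)
    (f : Finset (Fin n) → ℝ) (hf : ∀ S : Finset (Fin n), f S ∈ Set.Icc (-1 : ℝ) 1)
    (g : Finset (Fin n) → ℝ)
    (hg : ∀ T : Finset (Fin n),
      g T = ∑ σ : Equiv.Perm (Fin T.card),
        ((Equiv.Perm.sign σ : ℤ) : ℝ) *
          ∏ i : Fin T.card,
            f ((Finset.Iic i).image fun j => T.orderEmbOfFin rfl (σ j)))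
    (P R : ExteriorAlgebra ℝ (EuclideanSpace ℝ (Fin n)) →ₗ[ℝ]
           ExteriorAlgebra ℝ (EuclideanSpace ℝ (Fin n)))
    (hP : ∀ S : Finset (Fin n), P (deltaWedge n S) = f S • deltaWedge n S)
    (hR : ∀ φ : ExteriorAlgebra ℝ (EuclideanSpace ℝ (Fin n)),
      R φ = φ * ExteriorAlgebra.ι ℝ
        ((Real.sqrt n)⁻¹ • ∑ i : Fin n, EuclideanSpace.single i (1 : ℝ))) :
    g Finset.univ • deltaWedge n Finset.univ
      = (Real.sqrt n ^ n) •
        ((fun v => P (R v))^[n] (deltaWedge n (∅ : Finset (Fin n)))) :=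
  gN_deltaN_eq_iterate_general n f g hg P R hP hR
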